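/- arXiv:2501.09712 — 4 statements merged into one kernel-verified Lean document; each statement's English description precedes it below -/
import Mathlib

section
/- Let p_1, …, p_r be probability distributions on a finite set [d] and let (Λ_1, …, Λ_r) be functions Λ_x : [d] → [0,1] with Σ_x Λ_x(i) = 1 for all i. Let q be any probability distribution on [d] whose support contains the supports of all p_x. Then for every α > 1, min_x [ −ln Σ_i Λ_x(i) p_x(i) ] ≤ max_x D_α(q‖p_x) + (α/(α−1)) ln r, where D_α(q‖p_x) = (1/(α−1)) ln Σ_i q(i)^α p_x(i)^(1−α) (interpreted as +∞ if supp(q) ⊄ supp(p_x)). -/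
/-!
Averaging the normalization `∑ₓ ∑ᵢ Λₓ(i) q(i) = 1` over the `r` outcomes gives an outcome `x`
with `∑ᵢ Λₓ(i) q(i) ≥ 1/r`. Weighted Hölder with weights `Λₓ pₓ` applied to the likelihood
ratio `q / pₓ` bounds this by `(∑ᵢ Λₓ(i) pₓ(i))^(1 - 1/α) · (∑ᵢ q(i)^α pₓ(i)^(1-α))^(1/α)`,
using `Λₓ ≤ 1` in the second factor. Taking logarithms gives the bound for that `x`.
-/

open scoped BigOperators

/-- Classical Rényi divergence `D_α(q‖p)` of order `α`, valued in `EReal`, equal to `+∞` when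
`supp q ⊄ supp p`. -/
noncomputable def renyiDivE {d : ℕ} (α : ℝ) (q p : Fin d → ℝ) : EReal :=
  if ∀ i, p i = 0 → q i = 0 then
    (((α - 1)⁻¹ * Real.log (∑ i, q i ^ α * p i ^ (1 - α)) : ℝ) : EReal)
  else ⊤

open Real Finset

noncomputable def renyiSum {ι : Type*} [Fintype ι] (α : ℝ) (q p : ι → ℝ) : ℝ :=
  ∑ i, q i ^ α * p i ^ (1 - α)

lemma renyiSum_nonneg {ι : Type*} [Fintype ι] (α : ℝ) {q p : ι → ℝ} (hq : ∀ i, 0 ≤ q i)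
    (hp : ∀ i, 0 ≤ p i) : 0 ≤ renyiSum α q p :=
  sum_nonneg fun i _ ↦ mul_nonneg (rpow_nonneg (hq i) _) (rpow_nonneg (hp i) _)

lemma renyiDivE_of_support {d : ℕ} {α : ℝ} {q p : Fin d → ℝ} (h : ∀ i, p i = 0 → q i = 0) :
    renyiDivE α q p = (((α - 1)⁻¹ * log (renyiSum α q p) : ℝ) : EReal) :=
  if_pos h

lemma renyiDivE_of_not_support {d : ℕ} {α : ℝ} {q p : Fin d → ℝ}
    (h : ¬∀ i, p i = 0 → q i = 0) : renyiDivE α q p = ⊤ :=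
  if_neg h

lemma exists_inv_card_le_of_sum_eq_one {ι : Type*} [Fintype ι] {a : ι → ℝ}
    (h : ∑ x, a x = 1) : ∃ x, (Fintype.card ι : ℝ)⁻¹ ≤ a x := by
  have hne : (univ : Finset ι).Nonempty := nonempty_of_sum_ne_zero (h ▸ one_ne_zero)
  have : Nonempty ι := univ_nonempty_iff.1 hne
  obtain ⟨x, -, hx⟩ := exists_le_of_sum_le hne (f := fun _ ↦ (Fintype.card ι : ℝ)⁻¹) (g := a) <| by
    rw [h, sum_const, card_univ, nsmul_eq_mul, mul_inv_cancel₀ (by positivity)]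
  exact ⟨x, hx⟩

lemma sum_mul_le_rpow_mul_renyiSum_rpow {ι : Type*} [Fintype ι] {α : ℝ} (hα : 1 < α)
    {Λ p q : ι → ℝ} (hΛ : ∀ i, 0 ≤ Λ i ∧ Λ i ≤ 1) (hp : ∀ i, 0 ≤ p i) (hq : ∀ i, 0 ≤ q i)
    (hac : ∀ i, p i = 0 → q i = 0) :
    ∑ i, Λ i * q i ≤ (∑ i, Λ i * p i) ^ (1 - α⁻¹) * renyiSum α q p ^ α⁻¹ := by
  have hweight : ∀ i, Λ i * q i = Λ i * p i * (q i / p i) := fun i ↦ by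
    rcases (hp i).eq_or_lt with hpi | hpi
    · simp [hac i hpi.symm]
    · field_simp
  have hterm : ∀ i, Λ i * p i * (q i / p i) ^ α ≤ q i ^ α * p i ^ (1 - α) := fun i ↦ by
    have hterm0 : 0 ≤ q i ^ α * p i ^ (1 - α) :=
      mul_nonneg (rpow_nonneg (hq i) _) (rpow_nonneg (hp i) _)
    rcases (hp i).eq_or_lt with hpi | hpi
    · simpa [← hpi] using hterm0
    · calc Λ i * p i * (q i / p i) ^ α = Λ i * (q i ^ α * p i ^ (1 - α)) := by
            rw [div_rpow (hq i) hpi.le, rpow_sub hpi, rpow_one]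
            field_simp
        _ ≤ q i ^ α * p i ^ (1 - α) := mul_le_of_le_one_left hterm0 (hΛ i).2
  calc ∑ i, Λ i * q i = ∑ i, Λ i * p i * (q i / p i) := sum_congr rfl fun i _ ↦ hweight i
    _ ≤ (∑ i, Λ i * p i) ^ (1 - α⁻¹) * (∑ i, Λ i * p i * (q i / p i) ^ α) ^ α⁻¹ :=
        inner_le_weight_mul_Lp_of_nonneg univ hα.le _ _ (fun i ↦ mul_nonneg (hΛ i).1 (hp i))
          fun i ↦ div_nonneg (hq i) (hp i)
    _ ≤ _ := by
        gcongr _ * ?_ ^ _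
        · exact rpow_nonneg (sum_nonneg fun i _ ↦ mul_nonneg (hΛ i).1 (hp i)) _
        · exact sum_nonneg fun i _ ↦ mul_nonneg (mul_nonneg (hΛ i).1 (hp i))
            (rpow_nonneg (div_nonneg (hq i) (hp i)) _)
        · exact sum_le_sum fun i _ ↦ hterm i

lemma neg_log_le_of_le_rpow_mul_rpow {α c S Q : ℝ} (hα : 1 < α) (hc : 0 < c) (hS : 0 ≤ S)
    (hQ : 0 ≤ Q) (h : c ≤ S ^ (1 - α⁻¹) * Q ^ α⁻¹) :
    -log S ≤ (α - 1)⁻¹ * log Q - α / (α - 1) * log c := by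
  have hα0 : 0 < α := zero_lt_one.trans hα
  have hα1 : 0 < α - 1 := sub_pos.2 hα
  have hexp : 1 - α⁻¹ ≠ 0 := sub_ne_zero.2 (inv_lt_one_of_one_lt₀ hα).ne'
  have hSpos : 0 < S := hS.lt_of_ne' fun h0 ↦ by
    rw [h0, zero_rpow hexp, zero_mul] at h; linarith
  have hQpos : 0 < Q := hQ.lt_of_ne' fun h0 ↦ by
    rw [h0, zero_rpow (inv_ne_zero hα0.ne'), mul_zero] at h; linarith
  have hlog : log c ≤ (1 - α⁻¹) * log S + α⁻¹ * log Q := by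
    have := log_le_log hc h
    rwa [log_mul (rpow_pos_of_pos hSpos _).ne' (rpow_pos_of_pos hQpos _).ne', log_rpow hSpos,
      log_rpow hQpos] at this
  have hscaled := mul_le_mul_of_nonneg_left hlog (div_pos hα0 hα1).le
  have e : α / (α - 1) * ((1 - α⁻¹) * log S + α⁻¹ * log Q) = log S + (α - 1)⁻¹ * log Q := by
    field_simp
  linarith

theorem classical_oneshot_exclusion_converse_general
    {d r : ℕ} (p : Fin r → Fin d → ℝ) (q : Fin d → ℝ)
    (hp0 : ∀ x i, 0 ≤ p x i)
    (hq0 : ∀ i, 0 ≤ q i) (hq1 : ∑ i, q i = 1)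
    (Λ : Fin r → Fin d → ℝ)
    (hΛ01 : ∀ x i, 0 ≤ Λ x i ∧ Λ x i ≤ 1)
    (hΛsum : ∀ i, ∑ x, Λ x i = 1)
    (α : ℝ) (hα : 1 < α) :
    (⨅ x, ((-Real.log (∑ i, Λ x i * p x i) : ℝ) : EReal)) ≤
      (⨆ x, renyiDivE α q (p x)) + (((α / (α - 1)) * Real.log r : ℝ) : EReal) := by
  by_cases hac : ∀ x i, p x i = 0 → q i = 0
  · have hnorm : ∑ x, ∑ i, Λ x i * q i = 1 := by
      simp only [sum_comm (γ := Fin r), ← sum_mul, hΛsum, one_mul, hq1]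
    obtain ⟨x, hx⟩ := exists_inv_card_le_of_sum_eq_one hnorm
    rw [Fintype.card_fin] at hx
    have hr : (0 : ℝ) < r := Nat.cast_pos.2 x.pos
    have hbound := neg_log_le_of_le_rpow_mul_rpow hα (inv_pos.2 hr)
      (sum_nonneg fun i _ ↦ mul_nonneg (hΛ01 x i).1 (hp0 x i))
      (renyiSum_nonneg α hq0 (hp0 x))
      (hx.trans (sum_mul_le_rpow_mul_renyiSum_rpow hα (hΛ01 x) (hp0 x) hq0 (hac x)))
    rw [log_inv, mul_neg, sub_neg_eq_add] at hbound
    calc (⨅ x, ((-log (∑ i, Λ x i * p x i) : ℝ) : EReal))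
        ≤ ((-log (∑ i, Λ x i * p x i) : ℝ) : EReal) := iInf_le _ x
      _ ≤ renyiDivE α q (p x) + ((α / (α - 1) * log r : ℝ) : EReal) := by
        rw [renyiDivE_of_support (hac x), ← EReal.coe_add]
        exact EReal.coe_le_coe_iff.2 hbound
      _ ≤ _ := by gcongr; exact le_iSup (fun x ↦ renyiDivE α q (p x)) x
  · push Not at hac
    obtain ⟨x, i, hpi, hqi⟩ := hac
    have htop : (⨆ x, renyiDivE α q (p x)) = ⊤ := top_unique <|
      renyiDivE_of_not_support (fun h ↦ hqi (h i hpi)) ▸ le_iSup (fun x ↦ renyiDivE α q (p x)) x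
    rw [htop, EReal.top_add_coe]
    exact le_top

/-- One-shot converse for classical state exclusion: for distributions
`p_1,…,p_r` on `Fin d`, an `r`-outcome test `(Λ_x)_x`, and any distribution `q` whose support
contains the supports of all `p_x`, for every `α > 1`,
`min_x [−ln Σ_i Λ_x(i) p_x(i)] ≤ max_x D_α(q‖p_x) + (α/(α−1)) ln r`. -/
theorem classical_oneshot_exclusion_converse
    {d r : ℕ} (hr : 0 < r) (p : Fin r → Fin d → ℝ) (q : Fin d → ℝ)
    (hp0 : ∀ x i, 0 ≤ p x i) (hp1 : ∀ x, ∑ i, p x i = 1)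
    (hq0 : ∀ i, 0 ≤ q i) (hq1 : ∑ i, q i = 1)
    (hsupp : ∀ x i, q i = 0 → p x i = 0)
    (Λ : Fin r → Fin d → ℝ)
    (hΛ01 : ∀ x i, 0 ≤ Λ x i ∧ Λ x i ≤ 1)
    (hΛsum : ∀ i, ∑ x, Λ x i = 1)
    (α : ℝ) (hα : 1 < α) :
    (⨅ x, ((-Real.log (∑ i, Λ x i * p x i) : ℝ) : EReal)) ≤
      (⨆ x, renyiDivE α q (p x)) + (((α / (α - 1)) * Real.log r : ℝ) : EReal) :=
  classical_oneshot_exclusion_converse_general p q hp0 hq0 hq1 Λ hΛ01 hΛsum α hα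
end

section
/- Let q, p_1, …, p_r be probability distributions on a finite set [d] such that for every x, D(q‖p_x) < r_x, where D is the Kullback–Leibler divergence and r_1,…,r_r are nonnegative reals. Suppose (Λ^(n)_1, …, Λ^(n)_r) is, for each n, an r-outcome test on [d]^n (i.e., Λ^(n)_x : [d]^n → [0,1] with Σ_x Λ^(n)_x = 1 pointwise) satisfying liminf_{n→∞} −(1/n) ln( Σ_{i ∈ [d]^n} Λ^(n)_x(i) p_x^n(i) ) > D(q‖p_x) for every x ∈ [r], where p_x^n is the n-fold product of p_x. Then a contradiction follows; equivalently, for any such sequence of tests, min_x liminf_{n→∞} −(1/n) ln( Σ_i Λ^(n)_x(i) p_x^n(i) ) ≤ max_x D(q‖p_x). -/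
/-!
Write `αₙ(x) = E_{qⁿ}[Λ⁽ⁿ⁾_x]` and `βₙ(x) = E_{p_xⁿ}[Λ⁽ⁿ⁾_x]`. For `D(q‖p_x) < t`, splitting
`(Fin d)ⁿ` according to whether the log-likelihood ratio `∑ₖ log (q(iₖ) / p_x(iₖ))` exceeds `n t`
gives `αₙ(x) ≤ e^{n t} βₙ(x) + qⁿ(ratio > n t)`. The last term tends to `0` by Chebyshev's
inequality (the ratio has mean `n D(q‖p_x)` and variance `O(n)` under `qⁿ`), and the first does
once `βₙ(x) ≤ e^{-n c}` eventually for some `c > t`, which is what the exponent hypothesis says.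
So every `αₙ(x)` tends to `0`, although `∑ₓ αₙ(x) = 1`.
-/

open Filter Finset Real Topology

section ProductDistribution

variable {ι α : Type*} [Fintype ι] [DecidableEq ι] [Fintype α] {q : α → ℝ}

theorem sum_prod_apply_eq_one (hq1 : ∑ a, q a = 1) : ∑ i : ι → α, ∏ k, q (i k) = 1 := by
  rw [← Fintype.prod_sum (fun _ : ι => q)]
  simp [hq1]

theorem sum_prod_mul_prod (q : α → ℝ) (h : ι → α → ℝ) :
    ∑ i : ι → α, (∏ k, q (i k)) * ∏ k, h k (i k) = ∏ k, ∑ a, q a * h k a := by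
  simp_rw [← prod_mul_distrib]
  exact (Fintype.prod_sum fun k a => q a * h k a).symm

theorem sum_prod_mul_apply_mul_apply (hq1 : ∑ a, q a = 1) {g : α → ℝ}
    (hg : ∑ a, q a * g a = 0) (k l : ι) :
    ∑ i : ι → α, (∏ m, q (i m)) * (g (i k) * g (i l)) =
      if k = l then ∑ a, q a * g a ^ 2 else 0 := by
  have hfactor : ∀ i : ι → α, g (i k) * g (i l) =
      ∏ m, (if m = k then g (i m) else 1) * (if m = l then g (i m) else 1) := by
    intro i
    rw [prod_mul_distrib, prod_ite_eq', prod_ite_eq']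
    simp
  simp_rw [hfactor]
  rw [sum_prod_mul_prod q fun m a => (if m = k then g a else 1) * (if m = l then g a else 1)]
  split_ifs with hkl
  · subst hkl
    rw [prod_eq_single k (fun m _ hm => by simp [hm, hq1]) (by simp)]
    simp [sq]
  · exact prod_eq_zero (mem_univ k) (by simp [hkl, hg])

theorem sum_prod_mul_sum_sq (hq1 : ∑ a, q a = 1) {g : α → ℝ} (hg : ∑ a, q a * g a = 0) :
    ∑ i : ι → α, (∏ m, q (i m)) * (∑ k, g (i k)) ^ 2 =
      Fintype.card ι * ∑ a, q a * g a ^ 2 := by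
  have hexpand : ∀ i : ι → α, (∏ m, q (i m)) * (∑ k, g (i k)) ^ 2 =
      ∑ k, ∑ l, (∏ m, q (i m)) * (g (i k) * g (i l)) := by
    intro i
    simp_rw [sq, sum_mul_sum, mul_sum]
  simp_rw [hexpand]
  rw [sum_comm]
  simp_rw [sum_comm (s := (univ : Finset (ι → α))), sum_prod_mul_apply_mul_apply hq1 hg]
  simp

theorem sq_mul_sum_prod_filter_lt_le (hq0 : ∀ a, 0 ≤ q a) (hq1 : ∑ a, q a = 1) (f : α → ℝ)
    {t : ℝ} (ht : ∑ a, q a * f a ≤ t) :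
    (Fintype.card ι * (t - ∑ a, q a * f a)) ^ 2 *
        ∑ i : ι → α with Fintype.card ι * t < ∑ k, f (i k), ∏ k, q (i k) ≤
      Fintype.card ι * ∑ a, q a * (f a - ∑ b, q b * f b) ^ 2 := by
  set μ := ∑ a, q a * f a
  set N : ℝ := (Fintype.card ι : ℝ)
  have hcentered : ∑ a, q a * (f a - μ) = 0 := by
    simp [mul_sub, sum_sub_distrib, ← sum_mul, hq1, μ]
  have hq0' : ∀ i : ι → α, 0 ≤ ∏ k, q (i k) := fun i => prod_nonneg fun k _ => hq0 _
  rw [← sum_prod_mul_sum_sq hq1 hcentered, mul_sum]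
  calc ∑ i : ι → α with N * t < ∑ k, f (i k), (N * (t - μ)) ^ 2 * ∏ k, q (i k)
      ≤ ∑ i : ι → α with N * t < ∑ k, f (i k), (∏ k, q (i k)) * (∑ k, (f (i k) - μ)) ^ 2 := by
        refine sum_le_sum fun i hi => ?_
        have hdev : N * (t - μ) ≤ ∑ k, (f (i k) - μ) := by
          simp only [sum_sub_distrib, sum_const, card_univ, nsmul_eq_mul]
          linarith [(mem_filter.1 hi).2]
        rw [mul_comm]
        gcongr
        · exact hq0' i
    _ ≤ ∑ i : ι → α, (∏ k, q (i k)) * (∑ k, (f (i k) - μ)) ^ 2 :=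
        sum_le_sum_of_subset_of_nonneg (filter_subset _ _)
          fun i _ _ => mul_nonneg (hq0' i) (sq_nonneg _)

end ProductDistribution

theorem tendsto_sum_prod_filter_lt {α : Type*} [Fintype α] {q : α → ℝ} (hq0 : ∀ a, 0 ≤ q a)
    (hq1 : ∑ a, q a = 1) (f : α → ℝ) {t : ℝ} (ht : ∑ a, q a * f a < t) :
    Tendsto (fun n : ℕ => ∑ i : Fin n → α with n * t < ∑ k, f (i k), ∏ k, q (i k))
      atTop (𝓝 0) := by
  set δ := t - ∑ a, q a * f a
  set V := ∑ a, q a * (f a - ∑ b, q b * f b) ^ 2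
  have hδ : 0 < δ := sub_pos.2 ht
  have hbound : ∀ n : ℕ, 1 ≤ n →
      ∑ i : Fin n → α with n * t < ∑ k, f (i k), ∏ k, q (i k) ≤ V / δ ^ 2 * (1 / n) := by
    intro n hn
    have hn' : (0 : ℝ) < n := by exact_mod_cast hn
    have key := sq_mul_sum_prod_filter_lt_le (ι := Fin n) hq0 hq1 f ht.le
    simp only [Fintype.card_fin] at key
    rw [div_mul_div_comm, mul_one, le_div_iff₀ (by positivity)]
    nlinarith
  have hlim : Tendsto (fun n : ℕ => V / δ ^ 2 * (1 / n)) atTop (𝓝 0) := by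
    simpa using tendsto_one_div_atTop_nhds_zero_nat.const_mul (V / δ ^ 2)
  refine tendsto_of_tendsto_of_tendsto_of_le_of_le' tendsto_const_nhds hlim
    (Eventually.of_forall fun n => sum_nonneg fun i _ => prod_nonneg fun k _ => hq0 _) ?_
  filter_upwards [eventually_ge_atTop 1] with n hn using hbound n hn

theorem prod_le_exp_mul_prod {ι : Type*} [Fintype ι] {a b : ι → ℝ} (ha : ∀ k, 0 ≤ a k)
    (hb : ∀ k, 0 ≤ b k) (hab : ∀ k, b k = 0 → a k = 0) {s : ℝ}
    (h : ∑ k, log (a k / b k) ≤ s) : ∏ k, a k ≤ exp s * ∏ k, b k := by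
  by_cases hzero : ∃ k, a k = 0
  · obtain ⟨k, hk⟩ := hzero
    rw [prod_eq_zero (mem_univ k) hk]
    exact mul_nonneg (exp_pos s).le (prod_nonneg fun k _ => hb k)
  push Not at hzero
  have hpos : ∀ k, 0 < a k / b k := fun k =>
    div_pos ((ha k).lt_of_ne (hzero k).symm) ((hb k).lt_of_ne fun h => hzero k (hab k h.symm))
  have hratio : ∀ k, a k = exp (log (a k / b k)) * b k := fun k => by
    rw [exp_log (hpos k), div_mul_cancel₀]
    exact fun h => hzero k (hab k h)
  calc ∏ k, a k = exp (∑ k, log (a k / b k)) * ∏ k, b k := by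
        rw [exp_sum, ← prod_mul_distrib]
        exact prod_congr rfl fun k _ => hratio k
    _ ≤ exp s * ∏ k, b k := by
        gcongr
        exact prod_nonneg fun k _ => hb k

theorem sum_mul_prod_le_exp_mul_add {ι α : Type*} [Fintype ι] [DecidableEq ι] [Fintype α]
    {q p : α → ℝ} (hq0 : ∀ a, 0 ≤ q a) (hp0 : ∀ a, 0 ≤ p a) (hsupp : ∀ a, p a = 0 → q a = 0)
    {Λ : (ι → α) → ℝ} (hΛ0 : ∀ i, 0 ≤ Λ i) (hΛ1 : ∀ i, Λ i ≤ 1) (s : ℝ) :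
    ∑ i, Λ i * ∏ k, q (i k) ≤
      exp s * ∑ i, Λ i * ∏ k, p (i k) +
        ∑ i : ι → α with s < ∑ k, log (q (i k) / p (i k)), ∏ k, q (i k) := by
  rw [← sum_filter_not_add_sum_filter univ fun i : ι → α => s < ∑ k, log (q (i k) / p (i k))]
  gcongr ?_ + ?_
  · calc ∑ i with ¬s < ∑ k, log (q (i k) / p (i k)), Λ i * ∏ k, q (i k)
        ≤ ∑ i with ¬s < ∑ k, log (q (i k) / p (i k)), exp s * (Λ i * ∏ k, p (i k)) := by
          refine sum_le_sum fun i hi => ?_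
          rw [mul_left_comm]
          exact mul_le_mul_of_nonneg_left (prod_le_exp_mul_prod (fun k => hq0 _)
            (fun k => hp0 _) (fun k => hsupp _) (not_lt.1 (mem_filter.1 hi).2)) (hΛ0 i)
      _ ≤ exp s * ∑ i, Λ i * ∏ k, p (i k) := by
          rw [← mul_sum]
          exact mul_le_mul_of_nonneg_left (sum_le_sum_of_subset_of_nonneg (filter_subset _ _)
            fun i _ _ => mul_nonneg (hΛ0 i) (prod_nonneg fun k _ => hp0 _)) (exp_pos s).le
  · exact sum_le_sum fun i _ => mul_le_of_le_one_left (prod_nonneg fun k _ => hq0 _) (hΛ1 i)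

theorem le_exp_neg_mul_of_lt_neg_one_div_mul_log {β c : ℝ} {n : ℕ} (hβ : 0 ≤ β) (hn : 0 < n)
    (h : c < -(1 / (n : ℝ)) * log β) : β ≤ exp (-(c * n)) := by
  rcases hβ.eq_or_lt with rfl | hβ
  · positivity
  rw [← log_le_iff_le_exp hβ]
  rw [show -(1 / (n : ℝ)) * log β = -log β / n by ring, lt_div_iff₀ (by positivity)] at h
  linarith

theorem tendsto_sum_mul_prod_of_lt_liminf {α : Type*} [Fintype α] {q p : α → ℝ}
    (hq0 : ∀ a, 0 ≤ q a) (hq1 : ∑ a, q a = 1) (hp0 : ∀ a, 0 ≤ p a) (hp1 : ∑ a, p a = 1)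
    (hsupp : ∀ a, p a = 0 → q a = 0) {Λ : (n : ℕ) → (Fin n → α) → ℝ}
    (hΛ0 : ∀ n i, 0 ≤ Λ n i) (hΛ1 : ∀ n i, Λ n i ≤ 1)
    (hexp : ∑ a, q a * log (q a / p a) <
      liminf (fun n : ℕ => -(1 / (n : ℝ)) * log (∑ i, Λ n i * ∏ k, p (i k))) atTop) :
    Tendsto (fun n : ℕ => ∑ i, Λ n i * ∏ k, q (i k)) atTop (𝓝 0) := by
  set β : ℕ → ℝ := fun n => ∑ i, Λ n i * ∏ k, p (i k)
  have hβ0 : ∀ n, 0 ≤ β n := fun n =>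
    sum_nonneg fun i _ => mul_nonneg (hΛ0 n i) (prod_nonneg fun k _ => hp0 _)
  have hβ1 : ∀ n, β n ≤ 1 := fun n =>
    (sum_le_sum fun i _ => mul_le_of_le_one_left (prod_nonneg fun k _ => hp0 _) (hΛ1 n i)).trans
      (sum_prod_apply_eq_one hp1).le
  obtain ⟨t, hDt, htL⟩ := exists_between hexp
  obtain ⟨c, htc, hcL⟩ := exists_between htL
  have hexp_bdd : IsBoundedUnder (· ≥ ·) atTop fun n : ℕ => -(1 / (n : ℝ)) * log (β n) :=
    isBoundedUnder_of ⟨0, fun n => mul_nonneg_of_nonpos_of_nonpos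
      (neg_nonpos.2 (by positivity)) (log_nonpos (hβ0 n) (hβ1 n))⟩
  have hβc : ∀ᶠ n : ℕ in atTop, β n ≤ exp (-(c * n)) := by
    filter_upwards [eventually_lt_of_lt_liminf hcL hexp_bdd, eventually_gt_atTop 0]
      with n hn hpos using le_exp_neg_mul_of_lt_neg_one_div_mul_log (hβ0 n) hpos hn
  set tail : ℕ → ℝ := fun n =>
    ∑ i : Fin n → α with n * t < ∑ k, log (q (i k) / p (i k)), ∏ k, q (i k)
  have hbound : ∀ᶠ n : ℕ in atTop,
      ∑ i, Λ n i * ∏ k, q (i k) ≤ exp (-((c - t) * n)) + tail n := by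
    filter_upwards [hβc] with n hn
    calc ∑ i, Λ n i * ∏ k, q (i k) ≤ exp (n * t) * β n + tail n :=
          sum_mul_prod_le_exp_mul_add hq0 hp0 hsupp (hΛ0 n) (hΛ1 n) _
      _ ≤ exp (n * t) * exp (-(c * n)) + tail n := by gcongr
      _ = exp (-((c - t) * n)) + tail n := by rw [← exp_add]; ring_nf
  have hlim : Tendsto (fun n : ℕ => exp (-((c - t) * n)) + tail n) atTop (𝓝 0) := by
    have hdecay : Tendsto (fun n : ℕ => exp (-((c - t) * n))) atTop (𝓝 0) :=
      tendsto_exp_neg_atTop_nhds_zero.comp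
        (tendsto_natCast_atTop_atTop.const_mul_atTop (sub_pos.2 htc))
    simpa using hdecay.add (tendsto_sum_prod_filter_lt hq0 hq1 _ hDt)
  exact tendsto_of_tendsto_of_tendsto_of_le_of_le' tendsto_const_nhds hlim
    (Eventually.of_forall fun n => sum_nonneg fun i _ =>
      mul_nonneg (hΛ0 n i) (prod_nonneg fun k _ => hq0 _)) hbound

theorem classical_divergence_radius_contradiction_general
    {d r : ℕ} (q : Fin d → ℝ) (p : Fin r → Fin d → ℝ)
    (hq0 : ∀ i, 0 ≤ q i) (hq1 : ∑ i, q i = 1)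
    (hp0 : ∀ x i, 0 ≤ p x i) (hp1 : ∀ x, ∑ i, p x i = 1)
    (hsupp : ∀ x i, p x i = 0 → q i = 0)
    (Λ : (n : ℕ) → Fin r → ((Fin n → Fin d) → ℝ))
    (hΛ01 : ∀ n x i, 0 ≤ Λ n x i ∧ Λ n x i ≤ 1)
    (hΛsum : ∀ n i, ∑ x, Λ n x i = 1)
    (hexp : ∀ x,
      (∑ i, q i * Real.log (q i / p x i)) <
        Filter.liminf
          (fun n : ℕ =>
            -(1 / (n : ℝ)) * Real.log (∑ i : Fin n → Fin d, Λ n x i * ∏ k, p x (i k)))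
          Filter.atTop) :
    False := by
  have hvanish : ∀ x, Tendsto (fun n : ℕ => ∑ i, Λ n x i * ∏ k, q (i k)) atTop (𝓝 0) :=
    fun x => tendsto_sum_mul_prod_of_lt_liminf hq0 hq1 (hp0 x) (hp1 x) (hsupp x)
      (fun n i => (hΛ01 n x i).1) (fun n i => (hΛ01 n x i).2) (hexp x)
  have htotal : ∀ n : ℕ, ∑ x, ∑ i, Λ n x i * ∏ k, q (i k) = 1 := fun n => by
    rw [sum_comm]
    simp_rw [← sum_mul, hΛsum, one_mul]
    exact sum_prod_apply_eq_one hq1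
  have hsum := tendsto_finsetSum univ fun x _ => hvanish x
  simp only [htotal, sum_const_zero] at hsum
  exact one_ne_zero (tendsto_nhds_unique tendsto_const_nhds hsum)

/-- Classical divergence-radius converse for state exclusion: if `q, p_x`
are distributions on `Fin d` with `D(q‖p_x)` finite (`supp q ⊆ supp p_x`), and
`(Λ⁽ⁿ⁾_x)_x` is for each `n` an `r`-outcome test on `(Fin d)ⁿ` whose error exponents satisfy
`liminf −(1/n) ln Σ_i Λ⁽ⁿ⁾_x(i) p_x^n(i) > D(q‖p_x)` for every `x`, then a contradiction
follows. -/
theorem classical_divergence_radius_contradiction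
    {d r : ℕ} (q : Fin d → ℝ) (p : Fin r → Fin d → ℝ)
    (hq0 : ∀ i, 0 ≤ q i) (hq1 : ∑ i, q i = 1)
    (hp0 : ∀ x i, 0 ≤ p x i) (hp1 : ∀ x, ∑ i, p x i = 1)
    (hsupp : ∀ x i, p x i = 0 → q i = 0)
    (rr : Fin r → ℝ) (hrr : ∀ x, 0 ≤ rr x)
    (hD : ∀ x, (∑ i, q i * Real.log (q i / p x i)) < rr x)
    (Λ : (n : ℕ) → Fin r → ((Fin n → Fin d) → ℝ))
    (hΛ01 : ∀ n x i, 0 ≤ Λ n x i ∧ Λ n x i ≤ 1)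
    (hΛsum : ∀ n i, ∑ x, Λ n x i = 1)
    (hexp : ∀ x,
      (∑ i, q i * Real.log (q i / p x i)) <
        Filter.liminf
          (fun n : ℕ =>
            -(1 / (n : ℝ)) * Real.log (∑ i : Fin n → Fin d, Λ n x i * ∏ k, p x (i k)))
          Filter.atTop) :
    False :=
  classical_divergence_radius_contradiction_general q p hq0 hq1 hp0 hp1 hsupp Λ hΛ01 hΛsum hexp
end

section
/- Strong converse of the classical Stein's lemma (qualitative form): let p, q be probability distributions on a finite set [d] with supp(q) ⊆ supp(p), and let (Λ^(n))_n be a sequence of functions Λ^(n) : [d]^n → [0,1]. If liminf_{n→∞} −(1/n) ln Σ_{i∈[d]^n} Λ^(n)(i) p^n(i) > D(q‖p), then lim_{n→∞} Σ_{i∈[d]^n} Λ^(n)(i) q^n(i) = 0. -/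
/-!
For `α > 1`, Hölder's inequality with weights `Λ p^n` applied to the likelihood ratio
`q^n / p^n` bounds the success probability `Σ Λ q^n` by
`(Σ Λ p^n)^(1 - 1/α) · M(α)^(n/α)`, where `M(α) = Σ p (q/p)^α` is multiplicative under
products. Since `M(1) = 1` and `M'(1) = D(q‖p)`, any `L > D(q‖p)` admits an `α > 1` with
`M(α) < exp ((α - 1) L)`; if moreover `Σ Λ p^n ≤ exp (-n L)`, the bound decays geometrically.
-/

open Finset Real Filter Topology

/-- `exp ((α - 1) D_α(q‖p))`, with `D_α` the Rényi divergence of order `α`. -/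
noncomputable def renyiMoment {ι : Type*} [Fintype ι] (p q : ι → ℝ) (α : ℝ) : ℝ :=
  ∑ i, p i * (q i / p i) ^ α

section Finite

variable {ι : Type*} [Fintype ι] {p q : ι → ℝ}

theorem renyiMoment_nonneg (hp : ∀ i, 0 ≤ p i) (hq : ∀ i, 0 ≤ q i) (α : ℝ) :
    0 ≤ renyiMoment p q α :=
  sum_nonneg fun i _ => mul_nonneg (hp i) (rpow_nonneg (div_nonneg (hq i) (hp i)) α)

theorem sum_mul_le_sum_of_le_one {Λ P : ι → ℝ} (hΛ : ∀ i, 0 ≤ Λ i ∧ Λ i ≤ 1)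
    (hP : ∀ i, 0 ≤ P i) : ∑ i, Λ i * P i ≤ ∑ i, P i :=
  sum_le_sum fun i _ => mul_le_of_le_one_left (hP i) (hΛ i).2

theorem sum_mul_le_rpow_mul_renyiMoment {Λ P Q : ι → ℝ} (hΛ : ∀ i, 0 ≤ Λ i ∧ Λ i ≤ 1)
    (hP : ∀ i, 0 ≤ P i) (hQ : ∀ i, 0 ≤ Q i) (hPQ : ∀ i, P i = 0 → Q i = 0) {α : ℝ}
    (hα : 1 ≤ α) :
    ∑ i, Λ i * Q i ≤ (∑ i, Λ i * P i) ^ (1 - α⁻¹) * renyiMoment P Q α ^ α⁻¹ := by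
  have hw i : 0 ≤ Λ i * P i := mul_nonneg (hΛ i).1 (hP i)
  have hf i : 0 ≤ Q i / P i := div_nonneg (hQ i) (hP i)
  have hΛQ i : Λ i * P i * (Q i / P i) = Λ i * Q i := by
    rcases (hP i).eq_or_lt with h | h
    · simp [← h, hPQ i h.symm]
    · field_simp
  have hmoment : ∑ i, Λ i * P i * (Q i / P i) ^ α ≤ renyiMoment P Q α := by
    simp_rw [mul_assoc]
    exact sum_mul_le_sum_of_le_one hΛ fun i => mul_nonneg (hP i) (rpow_nonneg (hf i) α)
  calc ∑ i, Λ i * Q i = ∑ i, Λ i * P i * (Q i / P i) := by simp_rw [hΛQ]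
    _ ≤ (∑ i, Λ i * P i) ^ (1 - α⁻¹) * (∑ i, Λ i * P i * (Q i / P i) ^ α) ^ α⁻¹ :=
      inner_le_weight_mul_Lp_of_nonneg univ hα _ _ hw hf
    _ ≤ _ := by
      have hΛP : 0 ≤ ∑ i, Λ i * P i := sum_nonneg fun i _ => hw i
      have hΛPf : 0 ≤ ∑ i, Λ i * P i * (Q i / P i) ^ α :=
        sum_nonneg fun i _ => mul_nonneg (hw i) (rpow_nonneg (hf i) α)
      gcongr

theorem renyiMoment_eq_sum_mul_exp (hp : ∀ i, 0 ≤ p i) (hq : ∀ i, 0 ≤ q i)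
    (hpq : ∀ i, p i = 0 → q i = 0) {α : ℝ} (hα : α ≠ 0) :
    renyiMoment p q α = ∑ i, q i * exp ((α - 1) * log (q i / p i)) := by
  refine sum_congr rfl fun i _ => ?_
  rcases (hq i).eq_or_lt with h | hqi
  · simp [← h, zero_rpow hα]
  have hpi : 0 < p i := (hp i).lt_of_ne fun h => hqi.ne' (hpq i h.symm)
  rw [mul_comm (α - 1), ← rpow_def_of_pos (div_pos hqi hpi), rpow_sub (div_pos hqi hpi),
    rpow_one]
  field_simp

theorem hasDerivAt_sum_mul_exp (x : ι → ℝ) :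
    HasDerivAt (fun α => ∑ i, q i * exp ((α - 1) * x i)) (∑ i, q i * x i) 1 := by
  simpa using HasDerivAt.fun_sum (u := univ) fun i _ =>
    (((hasDerivAt_id' (1 : ℝ)).sub_const 1).mul_const (x i)).exp.const_mul (q i)

theorem exists_renyiMoment_lt_exp (hp : ∀ i, 0 ≤ p i) (hq : ∀ i, 0 ≤ q i) (hq1 : ∑ i, q i = 1)
    (hpq : ∀ i, p i = 0 → q i = 0) {L : ℝ} (hL : ∑ i, q i * log (q i / p i) < L) :
    ∃ α, 1 < α ∧ renyiMoment p q α < exp ((α - 1) * L) := by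
  set H : ℝ → ℝ := fun α => ∑ i, q i * exp ((α - 1) * log (q i / p i)) - exp ((α - 1) * L)
  have hH : HasDerivAt H (∑ i, q i * log (q i / p i) - L) 1 := by
    simpa using (hasDerivAt_sum_mul_exp (q := q) fun i => log (q i / p i)).fun_sub
      (((hasDerivAt_id' (1 : ℝ)).sub_const 1).mul_const L).exp
  have hH1 : H 1 = 0 := by simp [H, hq1]
  obtain ⟨α, hslope, hα⟩ := ((hH.hasDerivWithinAt.liminf_right_slope_le
    (sub_neg.2 hL)).and_eventually self_mem_nhdsWithin).exists
  refine ⟨α, hα, ?_⟩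
  rw [renyiMoment_eq_sum_mul_exp hp hq hpq (zero_lt_one.trans hα).ne']
  rwa [slope_def_field, hH1, sub_zero, div_lt_iff₀ (sub_pos.2 hα), zero_mul, sub_neg] at hslope

theorem renyiMoment_pi (hp : ∀ i, 0 ≤ p i) (hq : ∀ i, 0 ≤ q i) (n : ℕ) (α : ℝ) :
    renyiMoment (fun x : Fin n → ι => ∏ k, p (x k)) (fun x => ∏ k, q (x k)) α =
      renyiMoment p q α ^ n := by
  rw [renyiMoment, renyiMoment, Fintype.sum_pow]
  refine sum_congr rfl fun x _ => ?_
  rw [← prod_div_distrib, ← finsetProd_rpow _ _ fun k _ => div_nonneg (hq _) (hp _),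
    ← prod_mul_distrib]

end Finite

theorem eventually_le_exp_pow_of_lt_liminf {a : ℕ → ℝ} (ha0 : ∀ n, 0 ≤ a n)
    (ha1 : ∀ n, a n ≤ 1) {L : ℝ}
    (hL : L < liminf (fun n : ℕ => -(1 / (n : ℝ)) * log (a n)) atTop) :
    ∀ᶠ n in atTop, a n ≤ exp (-L) ^ n := by
  have hbdd : IsBoundedUnder (· ≥ ·) atTop fun n : ℕ => -(1 / (n : ℝ)) * log (a n) :=
    isBoundedUnder_of ⟨0, fun n => mul_nonneg_of_nonpos_of_nonpos
      (neg_nonpos.2 (by positivity)) (log_nonpos (ha0 n) (ha1 n))⟩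
  filter_upwards [eventually_lt_of_lt_liminf hL hbdd, eventually_gt_atTop 0] with n hn hn0
  rcases (ha0 n).eq_or_lt with h | h
  · rw [← h]; positivity
  have hn' : (0 : ℝ) < n := Nat.cast_pos.2 hn0
  rw [← exp_nat_mul, ← exp_log h, exp_le_exp]
  rw [one_div, neg_mul_comm, lt_inv_mul_iff₀ hn'] at hn
  linarith

theorem tendsto_zero_of_le_rpow_mul_rpow_pow {a b : ℕ → ℝ} {α L M : ℝ} (hα : 1 < α)
    (hM0 : 0 ≤ M) (hM : M < exp ((α - 1) * L)) (ha0 : ∀ n, 0 ≤ a n)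
    (ha : ∀ᶠ n in atTop, a n ≤ exp (-L) ^ n) (hb0 : ∀ n, 0 ≤ b n)
    (hb : ∀ n, b n ≤ a n ^ (1 - α⁻¹) * (M ^ n) ^ α⁻¹) : Tendsto b atTop (𝓝 0) := by
  have hα0 : 0 < α := zero_lt_one.trans hα
  have hβ : 0 ≤ 1 - α⁻¹ := sub_nonneg.2 (inv_le_one_of_one_le₀ hα.le)
  set r := exp (-L) ^ (1 - α⁻¹) * M ^ α⁻¹
  have hr1 : r < 1 := by
    have hMα : M ^ α⁻¹ < exp (L * (1 - α⁻¹)) := by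
      calc M ^ α⁻¹ < exp ((α - 1) * L) ^ α⁻¹ := rpow_lt_rpow hM0 hM (inv_pos.2 hα0)
        _ = exp (L * (1 - α⁻¹)) := by rw [← exp_mul]; congr 1; field_simp
    calc r < exp (-L) ^ (1 - α⁻¹) * exp (L * (1 - α⁻¹)) :=
          mul_lt_mul_of_pos_left hMα (by positivity)
      _ = 1 := by rw [← exp_mul, ← exp_add]; simp
  refine squeeze_zero' (.of_forall hb0) ?_
    (tendsto_pow_atTop_nhds_zero_of_lt_one (by positivity) hr1)
  filter_upwards [ha] with n han
  calc b n ≤ a n ^ (1 - α⁻¹) * (M ^ n) ^ α⁻¹ := hb n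
    _ ≤ (exp (-L) ^ n) ^ (1 - α⁻¹) * (M ^ n) ^ α⁻¹ := by gcongr; exact ha0 n
    _ = r ^ n := by rw [mul_pow, rpow_pow_comm (exp_pos _).le, rpow_pow_comm hM0]

/-- Strong converse of the classical Stein's lemma (qualitative form):
for distributions `p, q` on `Fin d` with `supp q ⊆ supp p` and a sequence of tests
`Λ⁽ⁿ⁾ : (Fin d)ⁿ → [0,1]`, if `liminf −(1/n) ln Σ Λ⁽ⁿ⁾ p^n > D(q‖p)`, then
`Σ Λ⁽ⁿ⁾ q^n → 0`. -/
theorem classical_stein_strong_converse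
    {d : ℕ} (p q : Fin d → ℝ)
    (hp0 : ∀ i, 0 ≤ p i) (hp1 : ∑ i, p i = 1)
    (hq0 : ∀ i, 0 ≤ q i) (hq1 : ∑ i, q i = 1)
    (hsupp : ∀ i, p i = 0 → q i = 0)
    (Λ : (n : ℕ) → ((Fin n → Fin d) → ℝ))
    (hΛ : ∀ n i, 0 ≤ Λ n i ∧ Λ n i ≤ 1)
    (hliminf :
      (∑ i, q i * Real.log (q i / p i)) <
        Filter.liminf
          (fun n : ℕ => -(1 / (n : ℝ)) * Real.log (∑ i : Fin n → Fin d, Λ n i * ∏ k, p (i k)))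
          Filter.atTop) :
    Filter.Tendsto (fun n : ℕ => ∑ i : Fin n → Fin d, Λ n i * ∏ k, q (i k))
      Filter.atTop (nhds 0) := by
  obtain ⟨L, hDL, hL⟩ := exists_between hliminf
  obtain ⟨α, hα, hM⟩ := exists_renyiMoment_lt_exp hp0 hq0 hq1 hsupp hDL
  have hpn (n : ℕ) (x : Fin n → Fin d) : 0 ≤ ∏ k, p (x k) := prod_nonneg fun k _ => hp0 (x k)
  have hqn (n : ℕ) (x : Fin n → Fin d) : 0 ≤ ∏ k, q (x k) := prod_nonneg fun k _ => hq0 (x k)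
  have hsuppn (n : ℕ) (x : Fin n → Fin d) (hx : ∏ k, p (x k) = 0) : ∏ k, q (x k) = 0 := by
    obtain ⟨k, -, hk⟩ := prod_eq_zero_iff.1 hx
    exact prod_eq_zero (mem_univ k) (hsupp _ hk)
  have hPn_nonneg (n : ℕ) : 0 ≤ ∑ x, Λ n x * ∏ k, p (x k) :=
    sum_nonneg fun x _ => mul_nonneg (hΛ n x).1 (hpn n x)
  have hPn_le_one (n : ℕ) : ∑ x, Λ n x * ∏ k, p (x k) ≤ 1 :=
    (sum_mul_le_sum_of_le_one (hΛ n) (hpn n)).trans_eq (by rw [← Fintype.sum_pow, hp1, one_pow])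
  refine tendsto_zero_of_le_rpow_mul_rpow_pow hα (renyiMoment_nonneg hp0 hq0 α) hM hPn_nonneg
    (eventually_le_exp_pow_of_lt_liminf hPn_nonneg hPn_le_one hL)
    (fun n => sum_nonneg fun x _ => mul_nonneg (hΛ n x).1 (hqn n x)) fun n => ?_
  rw [← renyiMoment_pi hp0 hq0]
  exact sum_mul_le_rpow_mul_renyiMoment (hΛ n) (hpn n) (hqn n) (hsuppn n) hα.le
end

section
/- Classical minimax identity for divergence radius: let p_1, …, p_r be probability distributions on a finite set [d] with ∩_x supp(p_x) ≠ ∅. Then inf_q max_x D(q‖p_x) = sup_{s ∈ P_r} inf_q Σ_x s_x D(q‖p_x), where q ranges over probability distributions on [d], D is the Kullback–Leibler divergence, and P_r is the simplex of probability vectors on [r]. -/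
/-- Kullback–Leibler divergence `D(q‖p)`, valued in `EReal`, `+∞` when `supp q ⊄ supp p`. -/
noncomputable def klDivE {d : ℕ} (q p : Fin d → ℝ) : EReal :=
  if ∀ i, p i = 0 → q i = 0 then ((∑ i, q i * Real.log (q i / p i) : ℝ) : EReal) else ⊤

/-- The simplex of probability distributions on `Fin d`. -/
def probSimplex (d : ℕ) : Set (Fin d → ℝ) :=
  {q | (∀ i, 0 ≤ q i) ∧ ∑ i, q i = 1}

/-!
The inequality `≥` holds pointwise: a convex combination of divergences is at most their maximum.

For `≤`, write `I = ⋂ₓ supp pₓ` and `Z(s) = ∑_{i ∈ I} ∏ₓ pₓ(i)^{sₓ}`. When `s` has full support,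
Gibbs' inequality gives `-log Z(s) ≤ ∑ₓ sₓ D(q‖pₓ)` for every `q`, and by continuity of `Z`,
`-log Z(s)` is below the right-hand side for every `s` in the simplex. Now let `s` minimize `Z` over
the compact simplex and `qₛ ∝ ∏ₓ pₓ^{sₓ}` on `I`. Then
`D(qₛ‖pₓ) = -log Z(s) + ∑_{i ∈ I} qₛ(i) (∑_y s_y log p_y(i) - log pₓ(i))`, and the last sum is minus
the derivative of `log Z` at `s` in the direction `eₓ - s` towards a vertex, which is `≥ 0` by
minimality. Hence `maxₓ D(qₛ‖pₓ) ≤ -log Z(s)`.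
-/

open Finset Real

theorem EReal.coe_finset_sum {ι : Type*} (t : Finset ι) (f : ι → ℝ) :
    ((∑ i ∈ t, f i : ℝ) : EReal) = ∑ i ∈ t, (f i : EReal) :=
  map_sum (⟨⟨Real.toEReal, coe_zero⟩, coe_add⟩ : ℝ →+ EReal) f t

theorem EReal.sum_ne_bot {ι : Type*} {t : Finset ι} {f : ι → EReal}
    (h : ∀ i ∈ t, f i ≠ ⊥) : ∑ i ∈ t, f i ≠ ⊥ := by
  classical
  induction t using Finset.induction with
  | empty => simp
  | insert a u ha ih =>
    rw [sum_insert ha, Ne, add_eq_bot_iff, not_or]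
    exact ⟨h a (mem_insert_self a u), ih fun i hi => h i (mem_insert_of_mem hi)⟩

theorem EReal.sum_eq_top_of_mem {ι : Type*} {t : Finset ι} {f : ι → EReal}
    (h : ∀ i ∈ t, f i ≠ ⊥) {j : ι} (hj : j ∈ t) (hfj : f j = ⊤) :
    ∑ i ∈ t, f i = ⊤ := by
  classical
  rw [← add_sum_erase t f hj, hfj]
  exact top_add_of_ne_bot (sum_ne_bot fun i hi => h i (mem_of_mem_erase hi))

theorem Real.sub_le_mul_log_div {a b : ℝ} (ha : 0 ≤ a) (hb : 0 < b) : a - b ≤ a * log (a / b) := by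
  rcases ha.eq_or_lt with rfl | ha
  · simp [hb.le]
  · have h := mul_le_mul_of_nonneg_left (log_le_sub_one_of_pos (div_pos hb ha)) ha.le
    have hba : a * (b / a - 1) = b - a := by field_simp
    rw [log_div hb.ne' ha.ne'] at h
    rw [log_div ha.ne' hb.ne']
    linarith

theorem Real.neg_log_sum_le_sum_mul_log_div {ι : Type*} {t : Finset ι} {q w : ι → ℝ}
    (hq : ∀ i ∈ t, 0 ≤ q i) (hq1 : ∑ i ∈ t, q i = 1) (hw : ∀ i ∈ t, 0 < w i) :
    -log (∑ i ∈ t, w i) ≤ ∑ i ∈ t, q i * log (q i / w i) := by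
  set W := ∑ i ∈ t, w i
  have hW : 0 < W := sum_pos hw (nonempty_of_sum_ne_zero (hq1 ▸ one_ne_zero))
  have hterm : ∀ i ∈ t, q i - w i / W ≤ q i * log (q i / w i) + q i * log W := by
    intro i hi
    calc q i - w i / W ≤ q i * log (q i / (w i / W)) :=
          sub_le_mul_log_div (hq i hi) (div_pos (hw i hi) hW)
      _ = q i * log (q i / w i) + q i * log W := by
          rcases (hq i hi).eq_or_lt with h | h
          · simp [← h]
          · rw [div_div_eq_mul_div, mul_div_right_comm,
              log_mul (div_pos h (hw i hi)).ne' hW.ne']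
            ring
  have h := sum_le_sum hterm
  rw [sum_sub_distrib, ← sum_div, hq1, div_self hW.ne', sum_add_distrib, ← sum_mul, hq1] at h
  linarith

theorem EReal.sum_coe_mul_le_iSup {ι : Type*} [Fintype ι] {s : ι → ℝ}
    (hs : s ∈ stdSimplex ℝ ι) {f : ι → EReal} (hf : ∀ i, f i ≠ ⊥) :
    ∑ i, (s i : EReal) * f i ≤ ⨆ i, f i := by
  by_cases htop : ⨆ i, f i = ⊤
  · exact htop ▸ le_top
  have hfi : ∀ i, f i ≠ ⊤ := fun i => ne_top_of_le_ne_top htop (le_iSup f i)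
  have hsup : (⨆ i, f i) ≠ ⊥ := by
    obtain ⟨i, -⟩ := nonempty_of_sum_ne_zero (hs.2 ▸ one_ne_zero : ∑ i, s i ≠ 0)
    exact ne_bot_of_le_ne_bot (hf i) (le_iSup f i)
  calc ∑ i, (s i : EReal) * f i = ((∑ i, s i * (f i).toReal : ℝ) : EReal) := by
        rw [coe_finset_sum]
        exact sum_congr rfl fun i _ => by rw [coe_mul, coe_toReal (hfi i) (hf i)]
    _ ≤ ((∑ i, s i * (⨆ i, f i).toReal : ℝ) : EReal) := by
        gcongr with i
        · exact hs.1 i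
        · exact toReal_le_toReal (le_iSup f i) (hf i) htop
    _ = ⨆ i, f i := by rw [← sum_mul, hs.2, one_mul, coe_toReal htop hsup]

theorem klDivE_ne_bot {d : ℕ} (q p : Fin d → ℝ) : klDivE q p ≠ ⊥ := by
  unfold klDivE
  split_ifs <;> simp

namespace DivergenceRadius

variable {d r : ℕ} (p : Fin r → Fin d → ℝ)

-- Off the common support some `log (p x i)` would be the junk value `log 0 = 0`.
open Classical in
noncomputable def commonSupport : Finset (Fin d) :=
  univ.filter fun i => ∀ x, p x i ≠ 0

@[simp]
theorem mem_commonSupport {i : Fin d} : i ∈ commonSupport p ↔ ∀ x, p x i ≠ 0 := by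
  classical
  simp [commonSupport]

noncomputable def logMix (s : Fin r → ℝ) (i : Fin d) : ℝ :=
  ∑ x, s x * log (p x i)

noncomputable def partitionFn (s : Fin r → ℝ) : ℝ :=
  ∑ i ∈ commonSupport p, exp (logMix p s i)

noncomputable def geomMix (s : Fin r → ℝ) (i : Fin d) : ℝ :=
  if i ∈ commonSupport p then exp (logMix p s i) / partitionFn p s else 0

theorem logMix_add_smul_sub (s t : Fin r → ℝ) (h : ℝ) (i : Fin d) :
    logMix p (s + h • (t - s)) i = logMix p s i + h * (logMix p t i - logMix p s i) := by
  simp only [logMix, Pi.add_apply, Pi.smul_apply, Pi.sub_apply, smul_eq_mul, mul_sum,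
    ← sum_sub_distrib, ← sum_add_distrib]
  exact sum_congr rfl fun x _ => by ring

theorem logMix_single (x : Fin r) (i : Fin d) : logMix p (Pi.single x 1) i = log (p x i) := by
  simp [logMix, Pi.single_apply]

theorem continuous_partitionFn : Continuous (partitionFn p) := by
  unfold partitionFn logMix
  fun_prop

variable {p}

theorem partitionFn_pos (hI : (commonSupport p).Nonempty) (s : Fin r → ℝ) :
    0 < partitionFn p s :=
  sum_pos (fun _ _ => exp_pos _) hI

theorem geomMix_of_mem {s : Fin r → ℝ} {i : Fin d} (hi : i ∈ commonSupport p) :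
    geomMix p s i = exp (logMix p s i) / partitionFn p s :=
  if_pos hi

theorem geomMix_of_notMem {s : Fin r → ℝ} {i : Fin d} (hi : i ∉ commonSupport p) :
    geomMix p s i = 0 :=
  if_neg hi

theorem sum_geomMix_commonSupport (hI : (commonSupport p).Nonempty) (s : Fin r → ℝ) :
    ∑ i ∈ commonSupport p, geomMix p s i = 1 := by
  rw [sum_congr rfl fun i hi => geomMix_of_mem hi, ← sum_div]
  exact div_self (partitionFn_pos hI s).ne'

variable (p) in
theorem sum_geomMix_eq_sum_commonSupport (s : Fin r → ℝ) (f : Fin d → ℝ) :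
    ∑ i, geomMix p s i * f i = ∑ i ∈ commonSupport p, geomMix p s i * f i :=
  (sum_subset (subset_univ _) fun i _ hi => by rw [geomMix_of_notMem hi, zero_mul]).symm

theorem geomMix_mem_probSimplex (hI : (commonSupport p).Nonempty) (s : Fin r → ℝ) :
    geomMix p s ∈ probSimplex d := by
  refine ⟨fun i => ?_, ?_⟩
  · unfold geomMix
    split_ifs
    exacts [div_nonneg (exp_pos _).le (partitionFn_pos hI s).le, le_rfl]
  · have h := sum_geomMix_eq_sum_commonSupport p s 1
    simp only [Pi.one_apply, mul_one] at h
    rw [h, sum_geomMix_commonSupport hI]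

theorem klDivE_geomMix (hI : (commonSupport p).Nonempty) (s : Fin r → ℝ) (x : Fin r) :
    klDivE (geomMix p s) (p x) =
      ((∑ i ∈ commonSupport p, geomMix p s i * (logMix p s i - log (p x i))
        - log (partitionFn p s) : ℝ) : EReal) := by
  have hsupp : ∀ i, p x i = 0 → geomMix p s i = 0 := fun i h =>
    geomMix_of_notMem fun hi => (mem_commonSupport p).1 hi x h
  have hlog : ∀ i ∈ commonSupport p, geomMix p s i * log (geomMix p s i / p x i) =
      geomMix p s i * (logMix p s i - log (p x i)) - geomMix p s i * log (partitionFn p s) := by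
    intro i hi
    rw [geomMix_of_mem hi, log_div (div_pos (exp_pos _) (partitionFn_pos hI s)).ne'
      ((mem_commonSupport p).1 hi x), log_div (exp_ne_zero _) (partitionFn_pos hI s).ne', log_exp]
    ring
  rw [klDivE, if_pos hsupp, sum_geomMix_eq_sum_commonSupport p, sum_congr rfl hlog,
    sum_sub_distrib, ← sum_mul, sum_geomMix_commonSupport hI, one_mul]

theorem hasDerivAt_partitionFn_add_smul_sub (s t : Fin r → ℝ) :
    HasDerivAt (fun h : ℝ => partitionFn p (s + h • (t - s)))
      (∑ i ∈ commonSupport p, exp (logMix p s i) * (logMix p t i - logMix p s i)) 0 := by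
  simp only [partitionFn, logMix_add_smul_sub]
  have := HasDerivAt.fun_sum (u := commonSupport p) fun i _ =>
    (((hasDerivAt_id (0 : ℝ)).mul_const (logMix p t i - logMix p s i)).const_add
      (logMix p s i)).exp
  simpa using this

theorem sum_exp_mul_logMix_sub_nonneg {s t : Fin r → ℝ}
    (hmin : IsMinOn (partitionFn p) (probSimplex r) s) (hs : s ∈ probSimplex r)
    (ht : t ∈ probSimplex r) :
    0 ≤ ∑ i ∈ commonSupport p, exp (logMix p s i) * (logMix p t i - logMix p s i) := by
  have hmin' : IsMinOn (fun h : ℝ => partitionFn p (s + h • (t - s))) (Set.Icc 0 1) 0 := by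
    intro h hh
    simpa using hmin ((convex_stdSimplex ℝ (Fin r)).add_smul_sub_mem hs ht hh)
  have hcone : (1 : ℝ) ∈ posTangentConeAt (Set.Icc (0 : ℝ) 1) 0 :=
    mem_posTangentConeAt_of_segment_subset (by simp [segment_eq_Icc])
  simpa using hmin'.localize.hasFDerivWithinAt_nonneg
    (hasDerivAt_partitionFn_add_smul_sub s t).hasFDerivAt.hasFDerivWithinAt hcone

theorem klDivE_geomMix_le_of_isMinOn (hI : (commonSupport p).Nonempty) {s : Fin r → ℝ}
    (hmin : IsMinOn (partitionFn p) (probSimplex r) s) (hs : s ∈ probSimplex r) (x : Fin r) :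
    klDivE (geomMix p s) (p x) ≤ ((-log (partitionFn p s) : ℝ) : EReal) := by
  have hvertex := sum_exp_mul_logMix_sub_nonneg hmin hs (single_mem_stdSimplex ℝ x)
  simp only [logMix_single] at hvertex
  have hdiv : ∑ i ∈ commonSupport p, geomMix p s i * (logMix p s i - log (p x i)) =
      -(∑ i ∈ commonSupport p, exp (logMix p s i) * (log (p x i) - logMix p s i)) /
        partitionFn p s := by
    rw [← sum_neg_distrib, sum_div]
    refine sum_congr rfl fun i hi => ?_
    rw [geomMix_of_mem hi]
    ring
  rw [klDivE_geomMix hI, EReal.coe_le_coe_iff, hdiv]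
  have := div_nonpos_of_nonpos_of_nonneg (neg_nonpos.2 hvertex) (partitionFn_pos hI s).le
  linarith

theorem sum_mul_mul_log_div_eq {s : Fin r → ℝ} (hs1 : ∑ x, s x = 1) {i : Fin d}
    (hi : i ∈ commonSupport p) (c : ℝ) :
    ∑ x, s x * (c * log (c / p x i)) = c * log (c / exp (logMix p s i)) := by
  rcases eq_or_ne c 0 with rfl | hc
  · simp
  have hlog : ∀ x, log (c / p x i) = log c - log (p x i) := fun x =>
    log_div hc ((mem_commonSupport p).1 hi x)
  simp only [hlog, log_div hc (exp_ne_zero _), log_exp, logMix, mul_sub, sum_sub_distrib,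
    ← sum_mul, hs1, mul_sum]
  exact congrArg₂ _ (by ring) (sum_congr rfl fun x _ => by ring)

theorem neg_log_partitionFn_le_sum_mul_klDivE {s : Fin r → ℝ} (hs : s ∈ probSimplex r)
    (hspos : ∀ x, 0 < s x) {q : Fin d → ℝ} (hq : q ∈ probSimplex d) :
    ((-log (partitionFn p s) : ℝ) : EReal) ≤ ∑ x, (s x : EReal) * klDivE q (p x) := by
  by_cases hsupp : ∀ x i, p x i = 0 → q i = 0
  swap
  · obtain ⟨x, hx⟩ := not_forall.1 hsupp
    have hbot : ∀ y ∈ univ, (s y : EReal) * klDivE q (p y) ≠ ⊥ := fun y _ =>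
      (EReal.mul_ne_bot _ _).2 ⟨.inl (EReal.coe_ne_bot _), .inr (klDivE_ne_bot _ _),
        .inl (EReal.coe_ne_top _), .inl (EReal.coe_nonneg.2 (hspos y).le)⟩
    rw [EReal.sum_eq_top_of_mem hbot (mem_univ x)
      (by rw [klDivE, if_neg hx, EReal.coe_mul_top_of_pos (hspos x)])]
    exact le_top
  have hq0 : ∀ i ∉ commonSupport p, q i = 0 := fun i hi => by
    obtain ⟨x, hx⟩ : ∃ x, p x i = 0 := by simpa using hi
    exact hsupp x i hx
  have hq1 : ∑ i ∈ commonSupport p, q i = 1 :=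
    hq.2 ▸ sum_subset (subset_univ _) fun i _ hi => hq0 i hi
  have hswap : ∑ x, s x * ∑ i, q i * log (q i / p x i) =
      ∑ i ∈ commonSupport p, q i * log (q i / exp (logMix p s i)) := by
    simp only [mul_sum]
    rw [sum_comm, ← sum_subset (subset_univ _) fun i _ hi => by simp [hq0 i hi]]
    exact sum_congr rfl fun i hi => sum_mul_mul_log_div_eq hs.2 hi (q i)
  calc ((-log (partitionFn p s) : ℝ) : EReal)
      ≤ ((∑ i ∈ commonSupport p, q i * log (q i / exp (logMix p s i)) : ℝ) : EReal) :=
        EReal.coe_le_coe_iff.2 <|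
          neg_log_sum_le_sum_mul_log_div (fun i _ => hq.1 i) hq1 fun i _ => exp_pos _
    _ = ∑ x, (s x : EReal) * klDivE q (p x) := by
        rw [← hswap, EReal.coe_finset_sum]
        exact sum_congr rfl fun x _ => by rw [klDivE, if_pos (hsupp x), EReal.coe_mul]

theorem neg_log_partitionFn_le_iSup_iInf (hI : (commonSupport p).Nonempty) (hr : 0 < r)
    {s : Fin r → ℝ} (hs : s ∈ probSimplex r) :
    ((-log (partitionFn p s) : ℝ) : EReal) ≤
      ⨆ s' : probSimplex r, ⨅ q : probSimplex d,
        ∑ x, ((s' : Fin r → ℝ) x : EReal) * klDivE (q : Fin d → ℝ) (p x) := by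
  set u : Fin r → ℝ := fun _ => (r : ℝ)⁻¹
  have hu : u ∈ probSimplex r := ⟨fun _ => by positivity, by simp [u, hr.ne']⟩
  have hcont : ContinuousAt
      (fun h : ℝ => ((-log (partitionFn p (s + h • (u - s))) : ℝ) : EReal)) 0 :=
    continuous_coe_real_ereal.continuousAt.comp
      (((continuous_partitionFn p).comp (by fun_prop)).continuousAt.log
        (partitionFn_pos hI _).ne').neg
  have hlim := hcont.tendsto.mono_left (nhdsWithin_le_nhds (s := Set.Ioi 0))
  simp only [zero_smul, add_zero] at hlim
  refine le_of_tendsto hlim ?_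
  filter_upwards [Ioc_mem_nhdsGT one_pos] with h hh
  have hsh : s + h • (u - s) ∈ probSimplex r :=
    (convex_stdSimplex ℝ (Fin r)).add_smul_sub_mem hs hu ⟨hh.1.le, hh.2⟩
  have hpos : ∀ x, 0 < (s + h • (u - s)) x := fun x => by
    have : 0 < h * (r : ℝ)⁻¹ := mul_pos hh.1 (by positivity)
    simp only [Pi.add_apply, Pi.smul_apply, Pi.sub_apply, smul_eq_mul, u]
    nlinarith [hs.1 x, hh.2]
  exact le_iSup_of_le ⟨_, hsh⟩ <|
    le_iInf fun q => neg_log_partitionFn_le_sum_mul_klDivE hsh hpos q.2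

variable (p) in
theorem exists_isMinOn_partitionFn (hr : 0 < r) :
    ∃ s ∈ probSimplex r, IsMinOn (partitionFn p) (probSimplex r) s :=
  (isCompact_stdSimplex ℝ (Fin r)).exists_isMinOn ⟨_, single_mem_stdSimplex ℝ ⟨0, hr⟩⟩
    (continuous_partitionFn p).continuousOn

end DivergenceRadius

open DivergenceRadius in
theorem classical_divergence_radius_minimax_general
    {d r : ℕ} (hr : 0 < r) (p : Fin r → Fin d → ℝ)
    (hcommon : ∃ i, ∀ x, p x i ≠ 0) :
    (⨅ q : probSimplex d, ⨆ x, klDivE (q : Fin d → ℝ) (p x)) =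
      ⨆ s : probSimplex r,
        ⨅ q : probSimplex d, ∑ x, ((s : Fin r → ℝ) x : EReal) * klDivE (q : Fin d → ℝ) (p x) := by
  obtain ⟨i, hi⟩ := hcommon
  have hI : (commonSupport p).Nonempty := ⟨i, (mem_commonSupport p).2 hi⟩
  obtain ⟨s, hs, hmin⟩ := exists_isMinOn_partitionFn p hr
  refine le_antisymm ?_ <| iSup_le fun s => le_iInf fun q => (iInf_le _ q).trans <|
    EReal.sum_coe_mul_le_iSup s.2 fun x => klDivE_ne_bot _ _
  calc (⨅ q : probSimplex d, ⨆ x, klDivE (q : Fin d → ℝ) (p x))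
      ≤ ⨆ x, klDivE (geomMix p s) (p x) := iInf_le_of_le ⟨_, geomMix_mem_probSimplex hI s⟩ le_rfl
    _ ≤ ((-log (partitionFn p s) : ℝ) : EReal) :=
        iSup_le (klDivE_geomMix_le_of_isMinOn hI hmin hs)
    _ ≤ _ := neg_log_partitionFn_le_iSup_iInf hI hr hs

/-- Classical minimax identity for the divergence radius: if the supports of
`p_1,…,p_r` have a common point, then
`inf_q max_x D(q‖p_x) = sup_{s∈P_r} inf_q Σ_x s_x D(q‖p_x)`, with `q` ranging over
distributions on `Fin d`. -/
theorem classical_divergence_radius_minimax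
    {d r : ℕ} (hr : 0 < r) (p : Fin r → Fin d → ℝ)
    (hp0 : ∀ x i, 0 ≤ p x i) (hp1 : ∀ x, ∑ i, p x i = 1)
    (hcommon : ∃ i, ∀ x, p x i ≠ 0) :
    (⨅ q : probSimplex d, ⨆ x, klDivE (q : Fin d → ℝ) (p x)) =
      ⨆ s : probSimplex r,
        ⨅ q : probSimplex d, ∑ x, ((s : Fin r → ℝ) x : EReal) * klDivE (q : Fin d → ℝ) (p x) :=
  classical_divergence_radius_minimax_general hr p hcommon
end
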